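/- arXiv:1205.5306 — 8 statements merged into one kernel-verified Lean document; each statement's English description precedes it below -/
import Mathlib

section
/- The 3×3 matrix M with rows (1,1,1), (1,0,1), (0,1,1) has a psd factorization of size 2: explicitly, the psd 2×2 matrices A_1 = [[0.5,-0.5],[-0.5,1]], A_2 = [[0.5,0],[0,0]], A_3 = [[0,0],[0,1]] for rows and B_1 = [[2,0],[0,0]], B_2 = [[0,0],[0,1]], B_3 = [[2,1],[1,1]] for columns satisfy Tr(A_i B_j) = M_{ij}, each A_i and B_j is positive semidefinite, and rank M = 3. -/
noncomputable def stmt2M : Matrix (Fin 3) (Fin 3) ℝ := !![1,1,1; 1,0,1; 0,1,1]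

noncomputable def stmt2A : Fin 3 → Matrix (Fin 2) (Fin 2) ℝ :=
  ![!![0.5, -0.5; -0.5, 1], !![0.5, 0; 0, 0], !![0, 0; 0, 1]]

noncomputable def stmt2B : Fin 3 → Matrix (Fin 2) (Fin 2) ℝ :=
  ![!![2, 0; 0, 0], !![0, 0; 0, 1], !![2, 1; 1, 1]]

section

variable {R : Type*} [CommRing R] [LinearOrder R] [IsStrictOrderedRing R]

theorem binary_quadratic_nonneg_of_sq_le {a b c : R} (ha : 0 ≤ a) (hc : 0 ≤ c)
    (h : b ^ 2 ≤ a * c) (x y : R) : 0 ≤ a * x ^ 2 + 2 * b * x * y + c * y ^ 2 := by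
  rcases ha.eq_or_lt with rfl | ha
  · obtain rfl : b = 0 := by nlinarith
    nlinarith
  · -- completing the square: `a * Q = (a x + b y)² + (a c - b²) y²`
    have : 0 ≤ a * (a * x ^ 2 + 2 * b * x * y + c * y ^ 2) := by
      nlinarith [sq_nonneg (a * x + b * y), mul_nonneg (sub_nonneg.2 h) (sq_nonneg y)]
    exact nonneg_of_mul_nonneg_right (by linarith) ha

theorem Matrix.posSemidef_fin_two_of_sq_le [StarRing R] [TrivialStar R] {a b c : R}
    (ha : 0 ≤ a) (hc : 0 ≤ c) (h : b ^ 2 ≤ a * c) :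
    (!![a, b; b, c] : Matrix (Fin 2) (Fin 2) R).PosSemidef := by
  refine .of_dotProduct_mulVec_nonneg ?_ fun x ↦ ?_
  · ext i j
    fin_cases i <;> fin_cases j <;> simp
  · simp only [star_trivial, dotProduct, mulVec, Fin.sum_univ_two, of_apply, cons_val',
      cons_val_zero, cons_val_one, empty_val', cons_val_fin_one]
    linear_combination binary_quadratic_nonneg_of_sq_le ha hc h (x 0) (x 1)

end

/-- the explicit psd factorization of size 2 of the given 3×3 matrix of rank 3. -/
theorem stmt2 :
    (∀ i, (stmt2A i).PosSemidef) ∧ (∀ j, (stmt2B j).PosSemidef) ∧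
    (∀ i j, (stmt2A i * stmt2B j).trace = stmt2M i j) ∧
    stmt2M.rank = 3 := by
  refine ⟨fun i ↦ ?_, fun j ↦ ?_, fun i j ↦ ?_, ?_⟩
  · fin_cases i <;>
      exact Matrix.posSemidef_fin_two_of_sq_le (by norm_num) (by norm_num) (by norm_num)
  · fin_cases j <;>
      exact Matrix.posSemidef_fin_two_of_sq_le (by norm_num) (by norm_num) (by norm_num)
  · fin_cases i <;> fin_cases j <;>
      norm_num [stmt2A, stmt2B, stmt2M, Matrix.mul_fin_two, Matrix.trace_fin_two]
  · have hdet : stmt2M.det ≠ 0 := by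
      simp [stmt2M, Matrix.det_fin_three]
    simpa using Matrix.rank_of_det_ne_zero hdet
end

section
/- The 3×3 derangement matrix M with M_{ij} = 0 if i = j and M_{ij} = 1 otherwise has rank 3, but has a Hadamard square root of rank 2 (for instance the matrix with rows (0,-1,1),(1,0,1),(1,1,0)). -/
/-- The 3×3 derangement matrix. -/
def derangement3 : Matrix (Fin 3) (Fin 3) ℝ := !![0,1,1; 1,0,1; 1,1,0]

/-- An explicit Hadamard square root of the derangement matrix. -/
def derangementSqrt : Matrix (Fin 3) (Fin 3) ℝ := !![0,-1,1; 1,0,1; 1,1,0]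

namespace Matrix

variable {m n k R : Type*} [Fintype n] [Fintype k]

theorem rank_mul_le_card_inner [CommSemiring R] [StrongRankCondition R]
    (A : Matrix m k R) (B : Matrix k n R) : (A * B).rank ≤ Fintype.card k :=
  (rank_mul_le_right A B).trans (rank_le_card_height B)

theorem card_le_rank_of_det_submatrix_ne_zero [CommRing R] [IsDomain R] [DecidableEq k]
    (A : Matrix m n R) {r : k → m} {c : k → n} (h : (A.submatrix r c).det ≠ 0) :
    Fintype.card k ≤ A.rank :=
  rank_of_det_ne_zero h ▸ rank_submatrix_le A r c

end Matrix

open Matrix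

theorem det_derangement3 : derangement3.det = 2 := by
  simp [derangement3, det_fin_three, one_add_one_eq_two]

theorem derangementSqrt_sq_apply (i j : Fin 3) : derangementSqrt i j ^ 2 = derangement3 i j := by
  fin_cases i <;> fin_cases j <;> simp [derangementSqrt, derangement3]

/-- The third row is the second minus the first. -/
theorem derangementSqrt_eq_mul :
    derangementSqrt = (!![1, 0; 0, 1; -1, 1] : Matrix (Fin 3) (Fin 2) ℝ) *
      (!![0, -1, 1; 1, 0, 1] : Matrix (Fin 2) (Fin 3) ℝ) := by
  ext i j
  fin_cases i <;> fin_cases j <;> simp [derangementSqrt, mul_apply]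

theorem det_derangementSqrt_submatrix_castSucc :
    (derangementSqrt.submatrix Fin.castSucc Fin.castSucc : Matrix (Fin 2) (Fin 2) ℝ).det = 1 := by
  simp [derangementSqrt, det_fin_two]

/-- the derangement matrix has rank 3 but a Hadamard square root of rank 2. -/
theorem stmt3 :
    derangement3.rank = 3 ∧
    (∀ i j, derangementSqrt i j ^ 2 = derangement3 i j) ∧
    derangementSqrt.rank = 2 := by
  refine ⟨?_, derangementSqrt_sq_apply, le_antisymm ?_ ?_⟩
  · rw [rank_of_det_ne_zero (det_derangement3 ▸ two_ne_zero), Fintype.card_fin]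
  · rw [derangementSqrt_eq_mul]
    exact (rank_mul_le_card_inner _ _).trans_eq (Fintype.card_fin 2)
  · exact (Fintype.card_fin 2).symm.trans_le <| card_le_rank_of_det_submatrix_ne_zero _
      (det_derangementSqrt_submatrix_castSucc ▸ one_ne_zero)
end

section
/- Let M ∈ ℝ^{p×q} be a nonnegative matrix whose psd rank is k, and let M' be the (p+1)×(q+1) matrix formed by appending a column of zeros to M and then a new bottom row (w, α) where w ∈ ℝ^q is nonnegative and α > 0. Then the psd rank of M' is exactly k+1. -/
/-!
Block-diagonal sums of factorizations make psd rank subadditive, and `M'` is the zero-padded `M`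
plus the nonnegative rank-one matrix `e_last (w, α)ᵀ`, so `M'` has a factorization of size `k + 1`.
Conversely, in a factorization of `M'` of size `n + 1` the factor `B` of the last column is
nonzero (it pairs with the last `A` to `α > 0`) and has trace pairing zero with every other `A i`.
For psd matrices this forces `A i * B = 0`, so these `A i` all kill a common unit vector `v`.
Conjugating by an orthogonal matrix with first column `v` and deleting the first row and column
gives a factorization of `M` of size `n`, whence `k ≤ n`.
-/

/-- `M` admits a psd factorization of size `k`. -/
def HasPsdFact {p q : ℕ} (M : Matrix (Fin p) (Fin q) ℝ) (k : ℕ) : Prop :=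
  ∃ (A : Fin p → Matrix (Fin k) (Fin k) ℝ) (B : Fin q → Matrix (Fin k) (Fin k) ℝ),
    (∀ i, (A i).PosSemidef) ∧ (∀ j, (B j).PosSemidef) ∧
    ∀ i j, (A i * B j).trace = M i j

open Matrix
open scoped ComplexOrder

namespace Matrix

variable {𝕜 : Type*} [RCLike 𝕜] {m n : Type*} [Fintype m] [Fintype n]

open scoped MatrixOrder in
theorem PosSemidef.mul_eq_zero_of_trace_mul_eq_zero {X Y : Matrix n n 𝕜} (hX : X.PosSemidef)
    (hY : Y.PosSemidef) (h : (X * Y).trace = 0) : X * Y = 0 := by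
  classical
  obtain ⟨S, rfl⟩ := CStarAlgebra.nonneg_iff_eq_star_mul_self.mp hX.nonneg
  obtain ⟨T, rfl⟩ := CStarAlgebra.nonneg_iff_eq_star_mul_self.mp hY.nonneg
  -- `tr (SᴴS TᴴT)` is the squared Frobenius norm of `S Tᴴ`.
  have hST : S * Tᴴ = 0 := by
    rw [← trace_conjTranspose_mul_self_eq_zero_iff, ← h]
    simp only [star_eq_conjTranspose, conjTranspose_mul, conjTranspose_conjTranspose,
      Matrix.mul_assoc]
    rw [trace_mul_comm T]
    simp only [Matrix.mul_assoc]
  rw [star_eq_conjTranspose, star_eq_conjTranspose, Matrix.mul_assoc, ← Matrix.mul_assoc S, hST,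
    Matrix.zero_mul, Matrix.mul_zero]

theorem PosSemidef.fromBlocks_zero {X : Matrix m m 𝕜} {Y : Matrix n n 𝕜} (hX : X.PosSemidef)
    (hY : Y.PosSemidef) : (fromBlocks X 0 0 Y).PosSemidef := by
  refine posSemidef_iff_dotProduct_mulVec.mpr ⟨?_, fun x => ?_⟩
  · simp [IsHermitian, fromBlocks_conjTranspose, hX.1.eq, hY.1.eq]
  · have := add_nonneg (hX.dotProduct_mulVec_nonneg (x ∘ Sum.inl))
      (hY.dotProduct_mulVec_nonneg (x ∘ Sum.inr))
    simpa [fromBlocks_mulVec, dotProduct, Fintype.sum_sum_type] using this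

theorem trace_fromBlocks_zero_mul_fromBlocks_zero (X X' : Matrix m m 𝕜) (Y Y' : Matrix n n 𝕜) :
    (fromBlocks X 0 0 Y * fromBlocks X' 0 0 Y').trace = (X * X').trace + (Y * Y').trace := by
  simp [fromBlocks_multiply, trace, Fintype.sum_sum_type]

theorem trace_submatrix_equiv {R : Type*} [AddCommMonoid R] (X : Matrix n n R) (e : m ≃ n) :
    (X.submatrix e e).trace = X.trace :=
  e.sum_comp fun i => X i i

theorem trace_submatrix_succ_mul_submatrix_succ {R : Type*} [NonUnitalNonAssocSemiring R] {k : ℕ}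
    {X : Matrix (Fin (k + 1)) (Fin (k + 1)) R} (hcol : ∀ s, X s 0 = 0) (hrow : ∀ t, X 0 t = 0)
    (Y : Matrix (Fin (k + 1)) (Fin (k + 1)) R) :
    (X.submatrix Fin.succ Fin.succ * Y.submatrix Fin.succ Fin.succ).trace = (X * Y).trace := by
  rw [← trace_submatrix_succ (X * Y)]
  simp [mul_apply, Fin.sum_univ_succ, hcol, hrow, trace]

theorem trace_conj_mul_conj_of_mem_unitaryGroup {R : Type*} [CommRing R] [StarRing R]
    [DecidableEq n] {U : Matrix n n R} (hU : U ∈ unitaryGroup n R) (X Y : Matrix n n R) :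
    (Uᴴ * X * U * (Uᴴ * Y * U)).trace = (X * Y).trace := by
  have hUU : U * Uᴴ = 1 := mem_unitaryGroup_iff.mp hU
  calc (Uᴴ * X * U * (Uᴴ * Y * U)).trace = (Uᴴ * (X * (U * Uᴴ) * Y) * U).trace := by
        simp only [Matrix.mul_assoc]
    _ = (X * Y).trace := by
        rw [hUU, Matrix.mul_one, trace_mul_cycle, hUU, Matrix.one_mul]

theorem exists_mem_unitaryGroup_forall_apply_zero_eq {k : ℕ} (v : EuclideanSpace 𝕜 (Fin (k + 1)))
    (hv : ‖v‖ = 1) : ∃ U ∈ unitaryGroup (Fin (k + 1)) 𝕜, ∀ r, U r 0 = v r := by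
  have hv' : Orthonormal 𝕜 (({0} : Set (Fin (k + 1))).domRestrict fun _ => v) :=
    ⟨fun _ => hv, Subsingleton.pairwise⟩
  obtain ⟨b, hb⟩ := hv'.exists_orthonormalBasis_extension_of_card_eq (by simp)
  refine ⟨(EuclideanSpace.basisFun _ 𝕜).toBasis.toMatrix b,
    (EuclideanSpace.basisFun _ 𝕜).toMatrix_orthonormalBasis_mem_unitary b, fun r => ?_⟩
  simp [Module.Basis.toMatrix_apply, hb 0 rfl]

end Matrix

theorem hasPsdFact_vecMulVec {p q : ℕ} {a : Fin p → ℝ} {b : Fin q → ℝ} (ha : 0 ≤ a)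
    (hb : 0 ≤ b) : HasPsdFact (vecMulVec a b) 1 :=
  ⟨fun i => diagonal fun _ => a i, fun j => diagonal fun _ => b j,
    fun i => .diagonal fun _ => ha i, fun j => .diagonal fun _ => hb j,
    fun i j => by simp [vecMulVec_apply]⟩

namespace HasPsdFact

variable {p q : ℕ} {M : Matrix (Fin p) (Fin q) ℝ}

theorem of_fintype {ι : Type*} [Fintype ι] {A : Fin p → Matrix ι ι ℝ} {B : Fin q → Matrix ι ι ℝ}
    (hA : ∀ i, (A i).PosSemidef) (hB : ∀ j, (B j).PosSemidef)
    (hAB : ∀ i j, (A i * B j).trace = M i j) : HasPsdFact M (Fintype.card ι) := by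
  let e := (Fintype.equivFin ι).symm
  refine ⟨fun i => (A i).submatrix e e, fun j => (B j).submatrix e e,
    fun i => (hA i).submatrix e, fun j => (hB j).submatrix e, fun i j => ?_⟩
  rw [submatrix_mul_equiv, trace_submatrix_equiv, hAB]

theorem eq_zero (h : HasPsdFact M 0) : M = 0 := by
  obtain ⟨A, B, -, -, hAB⟩ := h
  ext i j
  rw [← hAB, trace_fin_zero, Matrix.zero_apply]

theorem add {M₁ M₂ : Matrix (Fin p) (Fin q) ℝ} {k₁ k₂ : ℕ} (h₁ : HasPsdFact M₁ k₁)
    (h₂ : HasPsdFact M₂ k₂) : HasPsdFact (M₁ + M₂) (k₁ + k₂) := by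
  obtain ⟨A₁, B₁, hA₁, hB₁, hAB₁⟩ := h₁
  obtain ⟨A₂, B₂, hA₂, hB₂, hAB₂⟩ := h₂
  have := of_fintype (M := M₁ + M₂) (A := fun i => fromBlocks (A₁ i) 0 0 (A₂ i))
    (B := fun j => fromBlocks (B₁ j) 0 0 (B₂ j)) (fun i => (hA₁ i).fromBlocks_zero (hA₂ i))
    (fun j => (hB₁ j).fromBlocks_zero (hB₂ j))
    (fun i j => by rw [trace_fromBlocks_zero_mul_fromBlocks_zero, hAB₁, hAB₂, Matrix.add_apply])
  rwa [Fintype.card_sum, Fintype.card_fin, Fintype.card_fin] at this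

theorem extend_zero {k : ℕ} (h : HasPsdFact M k) {N : Matrix (Fin (p + 1)) (Fin (q + 1)) ℝ}
    (hN : ∀ i j, N i.castSucc j.castSucc = M i j) (hrow : ∀ j, N (Fin.last p) j = 0)
    (hcol : ∀ i, N i (Fin.last q) = 0) : HasPsdFact N k := by
  obtain ⟨A, B, hA, hB, hAB⟩ := h
  refine ⟨Fin.lastCases 0 A, Fin.lastCases 0 B, fun i => ?_, fun j => ?_, fun i j => ?_⟩
  · induction i using Fin.lastCases <;> simp [PosSemidef.zero, hA]
  · induction j using Fin.lastCases <;> simp [PosSemidef.zero, hB]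
  · induction i using Fin.lastCases <;> induction j using Fin.lastCases <;>
      simp [hN, hrow, hcol, hAB]

theorem of_forall_mulVec_eq_zero {k : ℕ} {A : Fin p → Matrix (Fin (k + 1)) (Fin (k + 1)) ℝ}
    {B : Fin q → Matrix (Fin (k + 1)) (Fin (k + 1)) ℝ} (hA : ∀ i, (A i).PosSemidef)
    (hB : ∀ j, (B j).PosSemidef) (hAB : ∀ i j, (A i * B j).trace = M i j)
    {v : Fin (k + 1) → ℝ} (hv : v ≠ 0) (hAv : ∀ i, A i *ᵥ v = 0) : HasPsdFact M k := by
  obtain ⟨U, hU, hU0⟩ := exists_mem_unitaryGroup_forall_apply_zero_eq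
    (‖WithLp.toLp 2 v‖⁻¹ • WithLp.toLp 2 v) (norm_smul_inv_norm (by simpa using hv))
  have hcol : ∀ i s, (Uᴴ * A i * U) s 0 = 0 := by
    intro i s
    have hU0' : (fun r => U r 0) = ‖WithLp.toLp 2 v‖⁻¹ • v := funext fun r => by simp [hU0]
    change ((Uᴴ * A i) *ᵥ (fun r => U r 0)) s = 0
    rw [hU0', mulVec_smul, ← mulVec_mulVec, hAv, mulVec_zero, smul_zero, Pi.zero_apply]
  have hrow : ∀ i t, (Uᴴ * A i * U) 0 t = 0 := fun i t => by
    rw [← ((hA i).conjTranspose_mul_mul_same U).1.apply, hcol, star_zero]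
  refine ⟨fun i => (Uᴴ * A i * U).submatrix Fin.succ Fin.succ,
    fun j => (Uᴴ * B j * U).submatrix Fin.succ Fin.succ,
    fun i => ((hA i).conjTranspose_mul_mul_same U).submatrix _,
    fun j => ((hB j).conjTranspose_mul_mul_same U).submatrix _, fun i j => ?_⟩
  rw [trace_submatrix_succ_mul_submatrix_succ (hcol i) (hrow i),
    trace_conj_mul_conj_of_mem_unitaryGroup hU, hAB]

variable {M' : Matrix (Fin (p + 1)) (Fin (q + 1)) ℝ}

theorem extend_succ {k : ℕ} (h : HasPsdFact M k) {w : Fin q → ℝ} (hw : ∀ j, 0 ≤ w j) {α : ℝ}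
    (hα : 0 ≤ α) (hM'₁ : ∀ (i : Fin p) (j : Fin q), M' i.castSucc j.castSucc = M i j)
    (hM'₂ : ∀ i : Fin p, M' i.castSucc (Fin.last q) = 0)
    (hM'₃ : ∀ j : Fin q, M' (Fin.last p) j.castSucc = w j)
    (hM'₄ : M' (Fin.last p) (Fin.last q) = α) : HasPsdFact M' (k + 1) := by
  set R := vecMulVec (Pi.single (Fin.last p) 1) (Fin.snoc w α : Fin (q + 1) → ℝ)
  have hR : HasPsdFact R 1 := hasPsdFact_vecMulVec (Pi.single_nonneg.mpr zero_le_one)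
    fun j => by induction j using Fin.lastCases <;> simp [hα, hw]
  have hrest : HasPsdFact (M' - R) k := h.extend_zero (by simp [R, vecMulVec_apply, hM'₁])
    (fun j => by induction j using Fin.lastCases <;> simp [R, vecMulVec_apply, hM'₃, hM'₄])
    (fun i => by induction i using Fin.lastCases <;> simp [R, vecMulVec_apply, hM'₂, hM'₄])
  simpa using hrest.add hR

theorem of_extend_succ {n : ℕ} (h : HasPsdFact M' (n + 1))
    (hM'₁ : ∀ (i : Fin p) (j : Fin q), M' i.castSucc j.castSucc = M i j)
    (hM'₂ : ∀ i : Fin p, M' i.castSucc (Fin.last q) = 0)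
    (hα : M' (Fin.last p) (Fin.last q) ≠ 0) : HasPsdFact M n := by
  obtain ⟨A, B, hA, hB, hAB⟩ := h
  obtain ⟨u, hu⟩ : ∃ u, B (Fin.last q) *ᵥ u ≠ 0 := by
    by_contra! hBu
    refine hα ?_
    have hB0 : B (Fin.last q) = 0 := ext_of_mulVec_single fun j => by rw [hBu, zero_mulVec]
    rw [← hAB, hB0, Matrix.mul_zero, trace_zero]
  refine of_forall_mulVec_eq_zero (A := fun i => A i.castSucc) (B := fun j => B j.castSucc)
    (fun _ => hA _) (fun _ => hB _) (fun i j => by rw [hAB, hM'₁]) hu fun i => ?_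
  rw [mulVec_mulVec, (hA _).mul_eq_zero_of_trace_mul_eq_zero (hB _) ((hAB _ _).trans (hM'₂ i)),
    zero_mulVec]

end HasPsdFact

theorem stmt4_general (p q k : ℕ) (M : Matrix (Fin p) (Fin q) ℝ)
    (hk : IsLeast {k' | HasPsdFact M k'} k)
    (w : Fin q → ℝ) (hw : ∀ j, 0 ≤ w j) (α : ℝ) (hα : 0 < α)
    (M' : Matrix (Fin (p+1)) (Fin (q+1)) ℝ)
    (hM'₁ : ∀ (i : Fin p) (j : Fin q), M' i.castSucc j.castSucc = M i j)
    (hM'₂ : ∀ i : Fin p, M' i.castSucc (Fin.last q) = 0)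
    (hM'₃ : ∀ j : Fin q, M' (Fin.last p) j.castSucc = w j)
    (hM'₄ : M' (Fin.last p) (Fin.last q) = α) :
    IsLeast {k' | HasPsdFact M' k'} (k + 1) := by
  have hα' : M' (Fin.last p) (Fin.last q) ≠ 0 := hM'₄ ▸ hα.ne'
  refine ⟨hk.1.extend_succ hw hα.le hM'₁ hM'₂ hM'₃ hM'₄, ?_⟩
  rintro (_ | n) hn
  · exact absurd (congrFun₂ hn.eq_zero _ _) hα'
  · exact Nat.succ_le_succ (hk.2 (hn.of_extend_succ hM'₁ hM'₂ hα'))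

/-- appending a zero column and then a bottom row `(w, α)` with `w ≥ 0`,
`α > 0` to a nonnegative matrix of psd rank `k` yields a matrix of psd rank exactly `k+1`. -/
theorem stmt4 (p q k : ℕ) (M : Matrix (Fin p) (Fin q) ℝ)
    (hM : ∀ i j, 0 ≤ M i j)
    (hk : IsLeast {k' | HasPsdFact M k'} k)
    (w : Fin q → ℝ) (hw : ∀ j, 0 ≤ w j) (α : ℝ) (hα : 0 < α)
    (M' : Matrix (Fin (p+1)) (Fin (q+1)) ℝ)
    (hM'₁ : ∀ (i : Fin p) (j : Fin q), M' i.castSucc j.castSucc = M i j)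
    (hM'₂ : ∀ i : Fin p, M' i.castSucc (Fin.last q) = 0)
    (hM'₃ : ∀ j : Fin q, M' (Fin.last p) j.castSucc = w j)
    (hM'₄ : M' (Fin.last p) (Fin.last q) = α) :
    IsLeast {k' | HasPsdFact M' k'} (k + 1) :=
  stmt4_general p q k M hk w hw α hα M' hM'₁ hM'₂ hM'₃ hM'₄
end

section
/- If B is a nonzero real symmetric positive semidefinite k×k matrix of rank r and A_1,...,A_p are psd k×k matrices with Tr(B A_i) = 0 for all i, then there is an orthogonal change of basis under which B is diagonal with its nonzero eigenvalues in the first r positions and each transformed A_i has zeros in its first r rows and columns; consequently any nonnegative matrix factorized by the A_i against arbitrary psd matrices B_j (via trace inner products) admits a psd factorization of size k − r. -/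
open Matrix

namespace Matrix

open scoped ComplexOrder in
lemma PosSemidef.apply_eq_zero_of_diag_eq_zero {𝕜 n : Type*} [RCLike 𝕜] [Fintype n]
    [DecidableEq n] {A : Matrix n n 𝕜} (hA : A.PosSemidef) {s : n} (hs : A s s = 0) (t : n) :
    A t s = 0 := by
  have h := (hA.dotProduct_mulVec_zero_iff (Pi.single s 1)).1 (by simp [hs])
  simpa using congrFun h t

lemma PosSemidef.apply_eq_zero_of_trace_diagonal_mul_eq_zero {n : Type*} [Fintype n]
    [DecidableEq n] {A : Matrix n n ℝ} (hA : A.PosSemidef) {d : n → ℝ} (hd : ∀ i, 0 ≤ d i)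
    (htr : (diagonal d * A).trace = 0) {s t : n} (hst : d s ≠ 0 ∨ d t ≠ 0) : A s t = 0 := by
  have hdiag : ∀ i, d i ≠ 0 → A i i = 0 := by
    have hsum : ∑ i, d i * A i i = 0 := by simpa [trace, diagonal_mul] using htr
    intro i hi
    have := (Fintype.sum_eq_zero_iff_of_nonneg fun j => mul_nonneg (hd j) hA.diag_nonneg).1 hsum
    exact (mul_eq_zero.1 (congrFun this i)).resolve_left hi
  rcases hst with hs | ht
  · rw [← hA.1.apply s t, hA.apply_eq_zero_of_diag_eq_zero (hdiag s hs) t, star_zero]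
  · exact hA.apply_eq_zero_of_diag_eq_zero (hdiag t ht) s

lemma PosSemidef.transpose_mul_mul_same {n : Type*} [Fintype n] {A : Matrix n n ℝ}
    (hA : A.PosSemidef) (U : Matrix n n ℝ) : (Uᵀ * A * U).PosSemidef := by
  simpa [conjTranspose_eq_transpose_of_trivial] using hA.conjTranspose_mul_mul_same U

lemma trace_conj_mul_conj {n : Type*} [Fintype n] [DecidableEq n] {U : Matrix n n ℝ}
    (hU : U ∈ orthogonalGroup n ℝ) (X Y : Matrix n n ℝ) :
    ((Uᵀ * X * U) * (Uᵀ * Y * U)).trace = (X * Y).trace := by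
  have hUUt : U * Uᵀ = 1 := (mem_orthogonalGroup_iff n ℝ).1 hU
  calc ((Uᵀ * X * U) * (Uᵀ * Y * U)).trace = (Uᵀ * (X * Y) * U).trace := by
        simp only [Matrix.mul_assoc, ← Matrix.mul_assoc U, hUUt, Matrix.one_mul]
    _ = (X * Y).trace := by rw [trace_mul_cycle, hUUt, Matrix.one_mul]

lemma trace_mul_eq_trace_submatrix_mul_submatrix {m n R : Type*} [Fintype m] [Fintype n]
    [NonUnitalNonAssocSemiring R] {e : m → n} (he : Function.Injective e) {X : Matrix n n R}
    (hX : ∀ s t, s ∉ Set.range e ∨ t ∉ Set.range e → X s t = 0) (Y : Matrix n n R) :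
    (X * Y).trace = (X.submatrix e e * Y.submatrix e e).trace := by
  simp only [trace, diag, mul_apply, submatrix_apply]
  symm
  refine Fintype.sum_of_injective e he _ _ (fun s hs => ?_) fun a => ?_
  · exact Finset.sum_eq_zero fun t _ => by rw [hX s t (.inl hs), zero_mul]
  · refine Fintype.sum_of_injective e he _ _ (fun t ht => ?_) fun b => rfl
    rw [hX _ t (.inr ht), zero_mul]

lemma rank_eq_card_ne_zero_of_conj_eq_diagonal {n : Type*} [Fintype n] [DecidableEq n]
    {B U : Matrix n n ℝ} (hU : U ∈ orthogonalGroup n ℝ) {d : n → ℝ}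
    (h : Uᵀ * B * U = diagonal d) : B.rank = Fintype.card {i // d i ≠ 0} := by
  have hdet : IsUnit U.det := isUnit_det_of_left_inverse ((mem_orthogonalGroup_iff' n ℝ).1 hU)
  have hdetT : IsUnit Uᵀ.det := by rwa [det_transpose]
  rw [← rank_diagonal, ← h, rank_mul_eq_left_of_isUnit_det _ _ hdet,
    rank_mul_eq_right_of_isUnit_det _ _ hdetT]

lemma IsHermitian.exists_orthogonal_conj_eq_diagonal_antitone {k : ℕ}
    {B : Matrix (Fin k) (Fin k) ℝ} (hB : B.IsHermitian) :
    ∃ U ∈ orthogonalGroup (Fin k) ℝ, ∃ d : Fin k → ℝ, Antitone d ∧ Uᵀ * B * U = diagonal d := by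
  set σ := Tuple.sort fun i => -hB.eigenvalues i
  set V : Matrix (Fin k) (Fin k) ℝ := (hB.eigenvectorUnitary : Matrix (Fin k) (Fin k) ℝ)
  have hV : V ∈ orthogonalGroup (Fin k) ℝ := hB.eigenvectorUnitary.2
  have hVBV : Vᵀ * B * V = diagonal hB.eigenvalues := by
    simpa [Unitary.conjStarAlgAut_star_apply, star_eq_conjTranspose,
      conjTranspose_eq_transpose_of_trivial] using hB.conjStarAlgAut_star_eigenvectorUnitary
  refine ⟨V.submatrix id σ, ?_, hB.eigenvalues ∘ σ, ?_, ?_⟩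
  · rw [mem_orthogonalGroup_iff', transpose_submatrix,
      ← submatrix_mul _ _ _ _ _ Function.bijective_id, (mem_orthogonalGroup_iff' _ _).1 hV,
      submatrix_one_equiv]
  · exact fun a b hab => neg_le_neg_iff.1 (Tuple.monotone_sort (fun i => -hB.eigenvalues i) hab)
  · rw [transpose_submatrix, ← submatrix_diagonal_equiv, ← hVBV,
      submatrix_mul _ _ _ id _ Function.bijective_id,
      submatrix_mul _ _ _ id _ Function.bijective_id, submatrix_id_id]

end Matrix

lemma Fin.val_lt_card_iff_of_antitone {k : ℕ} {P : Fin k → Prop} [DecidablePred P]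
    (hP : Antitone P) (s : Fin k) : s.val < Fintype.card {i // P i} ↔ P s := by
  rw [Fintype.card_subtype]
  constructor
  · intro hs
    by_contra hPs
    have hsub : ({i | P i} : Finset (Fin k)) ⊆ Finset.Iio s := fun t ht => by
      simp only [Finset.mem_filter, Finset.mem_univ, true_and] at ht
      exact Finset.mem_Iio.2 (lt_of_not_ge fun hst => hPs (hP hst ht))
    have := Finset.card_le_card hsub
    rw [Fin.card_Iio] at this
    omega
  · intro hPs
    have hsub : Finset.Iic s ⊆ ({i | P i} : Finset (Fin k)) := fun t ht => by
      simpa using hP (Finset.mem_Iic.1 ht) hPs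
    have := Finset.card_le_card hsub
    rw [Fin.card_Iic] at this
    omega

lemma Matrix.PosSemidef.exists_orthogonal_conj_eq_diagonal_of_rank_eq {k r : ℕ}
    {B : Matrix (Fin k) (Fin k) ℝ} (hB : B.PosSemidef) (hBr : B.rank = r) :
    ∃ U ∈ orthogonalGroup (Fin k) ℝ, ∃ d : Fin k → ℝ, Uᵀ * B * U = diagonal d ∧
      (∀ s, 0 ≤ d s) ∧ ∀ s : Fin k, s.val < r ↔ d s ≠ 0 := by
  obtain ⟨U, hU, d, hd, hBd⟩ := hB.1.exists_orthogonal_conj_eq_diagonal_antitone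
  have hd0 : ∀ s, 0 ≤ d s := fun s => by
    simpa [hBd] using (hB.transpose_mul_mul_same U).diag_nonneg (i := s)
  refine ⟨U, hU, d, hBd, hd0, fun s => ?_⟩
  rw [← hBr, rank_eq_card_ne_zero_of_conj_eq_diagonal hU hBd]
  exact Fin.val_lt_card_iff_of_antitone
    (fun i j hij hj => (((hd0 j).lt_of_ne' hj).trans_le (hd hij)).ne') s

lemma hasPsdFact_sub_of_forall_apply_eq_zero {p q k r : ℕ} {M : Matrix (Fin p) (Fin q) ℝ}
    {X : Fin p → Matrix (Fin k) (Fin k) ℝ} {Y : Fin q → Matrix (Fin k) (Fin k) ℝ}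
    (hX : ∀ i, (X i).PosSemidef) (hY : ∀ j, (Y j).PosSemidef)
    (hXr : ∀ i (s t : Fin k), s.val < r ∨ t.val < r → X i s t = 0)
    (hM : ∀ i j, (X i * Y j).trace = M i j) : HasPsdFact M (k - r) := by
  let e : Fin (k - r) → Fin k := fun j => ⟨r + j, by omega⟩
  have he : Function.Injective e := fun a b h => Fin.ext (by simpa [e] using congrArg Fin.val h)
  have hrange : ∀ s : Fin k, s ∉ Set.range e → s.val < r := fun s hs => by
    by_contra h
    exact hs ⟨⟨s - r, by omega⟩, Fin.ext (by simp only [e]; omega)⟩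
  refine ⟨fun i => (X i).submatrix e e, fun j => (Y j).submatrix e e,
    fun i => (hX i).submatrix e, fun j => (hY j).submatrix e, fun i j => ?_⟩
  rw [← trace_mul_eq_trace_submatrix_mul_submatrix he
    (fun s t hst => hXr i s t (hst.imp (hrange s) (hrange t))), hM]

theorem stmt6_general (k r p q : ℕ) (B : Matrix (Fin k) (Fin k) ℝ)
    (hB : B.PosSemidef) (hBr : B.rank = r)
    (A : Fin p → Matrix (Fin k) (Fin k) ℝ) (hA : ∀ i, (A i).PosSemidef)
    (horth : ∀ i, (B * A i).trace = 0) :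
    (∃ U : Matrix (Fin k) (Fin k) ℝ, U ∈ Matrix.orthogonalGroup (Fin k) ℝ ∧
      ∃ dvec : Fin k → ℝ,
        U.transpose * B * U = Matrix.diagonal dvec ∧
        (∀ s : Fin k, s.val < r → dvec s ≠ 0) ∧
        (∀ s : Fin k, r ≤ s.val → dvec s = 0) ∧
        ∀ (i : Fin p) (s t : Fin k), (s.val < r ∨ t.val < r) → (U.transpose * A i * U) s t = 0) ∧
    ∀ (M : Matrix (Fin p) (Fin q) ℝ) (Bs : Fin q → Matrix (Fin k) (Fin k) ℝ),
      (∀ i j, 0 ≤ M i j) → (∀ j, (Bs j).PosSemidef) →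
      (∀ i j, (A i * Bs j).trace = M i j) → HasPsdFact M (k - r) := by
  obtain ⟨U, hU, d, hBd, hd0, hdr⟩ := hB.exists_orthogonal_conj_eq_diagonal_of_rank_eq hBr
  have hAU : ∀ i, (Uᵀ * A i * U).PosSemidef := fun i => (hA i).transpose_mul_mul_same U
  have hzero : ∀ i (s t : Fin k), s.val < r ∨ t.val < r → (Uᵀ * A i * U) s t = 0 :=
    fun i s t hst => (hAU i).apply_eq_zero_of_trace_diagonal_mul_eq_zero hd0
      (by rw [← hBd, trace_conj_mul_conj hU, horth]) (hst.imp (hdr s).1 (hdr t).1)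
  refine ⟨⟨U, hU, d, hBd, fun s => (hdr s).1,
    fun s hs => of_not_not fun h => hs.not_gt ((hdr s).2 h), hzero⟩, ?_⟩
  intro M Bs _ hBs hM
  exact hasPsdFact_sub_of_forall_apply_eq_zero hAU (fun j => (hBs j).transpose_mul_mul_same U)
    hzero fun i j => by rw [trace_conj_mul_conj hU, hM]

/-- if `B` is a nonzero psd matrix of rank `r` and the psd matrices `A i`
satisfy `Tr(B * A i) = 0`, then there is an orthogonal change of basis diagonalizing `B`
with its nonzero eigenvalues in the first `r` positions and making each `A i` vanish on
the first `r` rows and columns; consequently any nonnegative matrix factorized by the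
`A i` against arbitrary psd matrices admits a psd factorization of size `k - r`. -/
theorem stmt6 (k r p q : ℕ) (B : Matrix (Fin k) (Fin k) ℝ)
    (hB : B.PosSemidef) (hB0 : B ≠ 0) (hBr : B.rank = r)
    (A : Fin p → Matrix (Fin k) (Fin k) ℝ) (hA : ∀ i, (A i).PosSemidef)
    (horth : ∀ i, (B * A i).trace = 0) :
    (∃ U : Matrix (Fin k) (Fin k) ℝ, U ∈ Matrix.orthogonalGroup (Fin k) ℝ ∧
      ∃ dvec : Fin k → ℝ,
        U.transpose * B * U = Matrix.diagonal dvec ∧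
        (∀ s : Fin k, s.val < r → dvec s ≠ 0) ∧
        (∀ s : Fin k, r ≤ s.val → dvec s = 0) ∧
        ∀ (i : Fin p) (s t : Fin k), (s.val < r ∨ t.val < r) → (U.transpose * A i * U) s t = 0) ∧
    ∀ (M : Matrix (Fin p) (Fin q) ℝ) (Bs : Fin q → Matrix (Fin k) (Fin k) ℝ),
      (∀ i j, 0 ≤ M i j) → (∀ j, (Bs j).PosSemidef) →
      (∀ i j, (A i * Bs j).trace = M i j) → HasPsdFact M (k - r) :=
  stmt6_general k r p q B hB hBr A hA horth
end

section
/- The psd rank of an n×n diagonal matrix with strictly positive diagonal entries is exactly n, and every psd factorization of such a matrix of size n uses only rank-one factors. -/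
/-!
If `tr(Aᵢ Bⱼ) = dᵢ δᵢⱼ` with all `Aᵢ, Bⱼ` psd, then `Aᵢ Bⱼ = 0` for `i ≠ j` (writing `A = XᴴX`
and `B = YᴴY`, `tr(AB)` is the squared Frobenius norm of `XYᴴ`), while `Aᵢ Bᵢ ≠ 0`. Choosing `uᵢ`
with `Aᵢ Bᵢ uᵢ ≠ 0`, the vectors `vᵢ = Bᵢ uᵢ` are linearly independent, since `Aⱼ` kills every `vᵢ`
except `vⱼ`. Hence the size of the factorization is at least `n`, and when it equals `n`, each `Aⱼ`
has a kernel of dimension `≥ n - 1`, so it has rank one; by the symmetry `tr(AB) = tr(BA)` the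
same holds for the `Bⱼ`.
-/

open Matrix
open scoped MatrixOrder ComplexOrder

namespace Matrix

theorem PosSemidef.mul_eq_zero_of_trace_mul_eq_zero_s7 {𝕜 m : Type*} [RCLike 𝕜] [Fintype m]
    {A B : Matrix m m 𝕜} (hA : A.PosSemidef) (hB : B.PosSemidef) (h : (A * B).trace = 0) :
    A * B = 0 := by
  classical
  obtain ⟨X, rfl⟩ := CStarAlgebra.nonneg_iff_eq_star_mul_self.mp hA.nonneg
  obtain ⟨Y, rfl⟩ := CStarAlgebra.nonneg_iff_eq_star_mul_self.mp hB.nonneg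
  simp only [star_eq_conjTranspose] at h ⊢
  have hXY : X * Yᴴ = 0 := by
    rw [← trace_mul_conjTranspose_self_eq_zero_iff, ← h, conjTranspose_mul,
      conjTranspose_conjTranspose, Matrix.mul_assoc, trace_mul_comm X, trace_mul_comm (Xᴴ * X)]
    simp only [Matrix.mul_assoc]
  rw [Matrix.mul_assoc, ← Matrix.mul_assoc X, hXY, Matrix.zero_mul, Matrix.mul_zero]

theorem mul_eq_zero_iff_ne_of_trace_mul_eq_diagonal {𝕜 ι m : Type*} [RCLike 𝕜] [Fintype m]
    [DecidableEq ι] {A B : ι → Matrix m m 𝕜} (hA : ∀ i, (A i).PosSemidef)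
    (hB : ∀ j, (B j).PosSemidef) {d : ι → 𝕜} (hd : ∀ i, d i ≠ 0)
    (htr : ∀ i j, (A i * B j).trace = diagonal d i j) (i j : ι) :
    A i * B j = 0 ↔ i ≠ j := by
  refine ⟨fun h hij => hd i ?_, fun hij => ?_⟩
  · subst hij
    simpa [h] using (htr i i).symm
  · exact (hA i).mul_eq_zero_of_trace_mul_eq_zero_s7 (hB j) (by rw [htr, diagonal_apply_ne _ hij])

variable {K ι l m p : Type*} [Field K] [Fintype m]

theorem exists_linearIndependent_mulVec_eq_zero_iff_ne {A : ι → Matrix l m K}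
    {B : ι → Matrix m p K} [Fintype p] (hAB : ∀ i j, A i * B j = 0 ↔ i ≠ j) :
    ∃ v : ι → m → K, LinearIndependent K v ∧ ∀ i j, A i *ᵥ v j = 0 ↔ i ≠ j := by
  have hdiag (i : ι) : ∃ u, (A i * B i) *ᵥ u ≠ 0 := by
    by_contra! h
    exact (hAB i i).mp (ext_iff_mulVec.mpr fun u => by simpa using h u) rfl
  choose u hu using hdiag
  have hv (i j : ι) : A i *ᵥ (B j *ᵥ u j) = 0 ↔ i ≠ j := by
    rw [mulVec_mulVec]
    refine ⟨fun h hij => hu i (hij ▸ h), fun hij => ?_⟩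
    rw [(hAB i j).mpr hij, zero_mulVec]
  refine ⟨fun j => B j *ᵥ u j, linearIndependent_iff'.mpr fun s g hg i hi => ?_, hv⟩
  have hAi : ∑ j ∈ s, g j • A i *ᵥ (B j *ᵥ u j) = 0 := by
    simpa only [mulVec_sum, mulVec_smul, mulVec_zero] using congrArg (A i *ᵥ ·) hg
  rw [Finset.sum_eq_single_of_mem i hi fun j _ hji => by rw [(hv i j).mpr hji.symm, smul_zero]]
    at hAi
  exact (smul_eq_zero.mp hAi).resolve_right ((hv i i).not_left.mpr rfl)

theorem rank_add_card_le_of_mulVec_eq_zero [Finite l] [Fintype ι] {v : ι → m → K}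
    (hv : LinearIndependent K v) {A : Matrix l m K} (hA : ∀ i, A *ᵥ v i = 0) :
    A.rank + Fintype.card ι ≤ Fintype.card m := by
  have hAv : A * (of v)ᵀ = 0 := by
    ext a i
    simpa [mul_apply, mulVec, dotProduct] using congrFun (hA i) a
  have hrank : (of v)ᵀ.rank = Fintype.card ι := by
    rw [rank_transpose]
    exact hv.rank_matrix
  exact hrank ▸ rank_add_rank_le_card_of_mul_eq_zero hAv

variable [Fintype ι] [Fintype p] {A : ι → Matrix l m K} {B : ι → Matrix m p K}

theorem card_le_of_mul_eq_zero_iff_ne (hAB : ∀ i j, A i * B j = 0 ↔ i ≠ j) :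
    Fintype.card ι ≤ Fintype.card m := by
  obtain ⟨v, hv, -⟩ := exists_linearIndependent_mulVec_eq_zero_iff_ne hAB
  simpa using hv.fintype_card_le_finrank

theorem rank_eq_one_of_mul_eq_zero_iff_ne [Finite l] (hcard : Fintype.card ι = Fintype.card m)
    (hAB : ∀ i j, A i * B j = 0 ↔ i ≠ j) (i : ι) : (A i).rank = 1 := by
  classical
  obtain ⟨v, hv, hAv⟩ := exists_linearIndependent_mulVec_eq_zero_iff_ne hAB
  have hle : (A i).rank + (Fintype.card ι - 1) ≤ Fintype.card m := by
    simpa [Fintype.card_subtype_compl] using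
      rank_add_card_le_of_mulVec_eq_zero (hv.comp (Subtype.val : {j // j ≠ i} → ι)
        Subtype.val_injective) fun j => (hAv i j).mpr (Ne.symm j.2)
  have hpos : (A i).rank ≠ 0 := fun h => (hAv i i).not_left.mpr rfl <| by
    simpa [Submodule.finrank_eq_zero.mp h] using LinearMap.mem_range_self (A i).mulVecLin (v i)
  have hι : 0 < Fintype.card ι := Fintype.card_pos_iff.mpr ⟨i⟩
  omega

theorem posSemidef_single_same {R m : Type*} [CommRing R] [PartialOrder R] [StarRing R]
    [StarOrderedRing R] [Fintype m] [DecidableEq m] (i : m) {c : R} (hc : 0 ≤ c) :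
    (single i i c).PosSemidef := by
  rw [← diagonal_single, posSemidef_diagonal_iff]
  exact Pi.single_nonneg.mpr hc

end Matrix

theorem hasPsdFact_diagonal {n : ℕ} {d : Fin n → ℝ} (hd : ∀ i, 0 ≤ d i) :
    HasPsdFact (diagonal d) n := by
  refine ⟨fun i => single i i (d i), fun j => single j j 1,
    fun i => posSemidef_single_same i (hd i), fun j => posSemidef_single_same j zero_le_one,
    fun i j => ?_⟩
  rcases eq_or_ne i j with rfl | hij
  · simp
  · simp [hij]

/-- an `n × n` diagonal matrix with strictly positive diagonal has psd rank
exactly `n`, and every psd factorization of size `n` uses only rank-one factors. -/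
theorem stmt7 (n : ℕ) (d : Fin n → ℝ) (hd : ∀ i, 0 < d i) :
    IsLeast {k | HasPsdFact (Matrix.diagonal d) k} n ∧
    ∀ (A B : Fin n → Matrix (Fin n) (Fin n) ℝ),
      (∀ i, (A i).PosSemidef) → (∀ j, (B j).PosSemidef) →
      (∀ i j, (A i * B j).trace = Matrix.diagonal d i j) →
      (∀ i, (A i).rank = 1) ∧ (∀ j, (B j).rank = 1) := by
  have hd₀ (i : Fin n) : d i ≠ 0 := (hd i).ne'
  refine ⟨⟨hasPsdFact_diagonal fun i => (hd i).le, ?_⟩, fun A B hA hB htr => ?_⟩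
  · rintro k ⟨A, B, hA, hB, htr⟩
    simpa using card_le_of_mul_eq_zero_iff_ne
      (mul_eq_zero_iff_ne_of_trace_mul_eq_diagonal hA hB hd₀ htr)
  have htr' (i j : Fin n) : (B i * A j).trace = diagonal d i j := by
    rw [trace_mul_comm, htr, ← transpose_apply (diagonal d), diagonal_transpose]
  exact ⟨rank_eq_one_of_mul_eq_zero_iff_ne rfl
      (mul_eq_zero_iff_ne_of_trace_mul_eq_diagonal hA hB hd₀ htr),
    rank_eq_one_of_mul_eq_zero_iff_ne rfl
      (mul_eq_zero_iff_ne_of_trace_mul_eq_diagonal hB hA hd₀ htr')⟩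
end

section
/- Let S be a (n+2)×f real matrix of rank n+1 with nonnegative entries such that every column of S has at least n zero entries. Then the entrywise nonnegative square root of S also has rank n+1. (This applies to the slack matrix of an n-dimensional polytope with n+2 vertices, proving such a polytope has psd rank n+1.) -/
/-!
Write `T = √S` and `σ x = x |x|` for the signed square, a multiplicative bijection of `ℝ`.
A column of `S` has at most two nonzero entries, and for at most two reals `a + b = 0` iff
`σ a + σ b = 0`; since `σ (c * √s) = σ c * s` for `s ≥ 0`, this shows that `c` is a left kernel
vector of `T` iff `σ ∘ c` is one of `S`. As `σ ∘ (μ • c) = σ μ • (σ ∘ c)`, the bijection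
`c ↦ σ ∘ c` carries a line onto a line, so the left kernel of `T` is one-dimensional like that
of `S`, and rank–nullity gives `rank T = n + 1`.
-/

open Finset Module

noncomputable def signedSq : ℝ ≃* ℝ where
  toFun x := x * |x|
  invFun y := √y - √(-y)
  left_inv x := by
    dsimp only
    rcases le_total 0 x with hx | hx
    · have : -(x * |x|) ≤ 0 := by rw [abs_of_nonneg hx]; nlinarith
      rw [Real.sqrt_eq_zero'.2 this, abs_of_nonneg hx, Real.sqrt_mul_self hx, sub_zero]
    · have : x * |x| ≤ 0 := by rw [abs_of_nonpos hx]; nlinarith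
      rw [Real.sqrt_eq_zero'.2 this, abs_of_nonpos hx, ← neg_mul,
        Real.sqrt_mul_self (neg_nonneg.2 hx), zero_sub, neg_neg]
  right_inv y := by
    dsimp only
    rcases le_total 0 y with hy | hy
    · rw [Real.sqrt_eq_zero'.2 (neg_nonpos.2 hy), sub_zero,
        abs_of_nonneg (Real.sqrt_nonneg y), Real.mul_self_sqrt hy]
    · rw [Real.sqrt_eq_zero'.2 hy, zero_sub, abs_neg, abs_of_nonneg (Real.sqrt_nonneg _),
        neg_mul, Real.mul_self_sqrt (neg_nonneg.2 hy), neg_neg]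
  map_mul' x y := by simp only [abs_mul]; ring

lemma signedSq_apply (x : ℝ) : signedSq x = x * |x| := rfl

lemma signedSq_neg (x : ℝ) : signedSq (-x) = -signedSq x := by
  simp only [signedSq_apply, abs_neg]; ring

lemma signedSq_sqrt {x : ℝ} (hx : 0 ≤ x) : signedSq √x = x := by
  rw [signedSq_apply, abs_of_nonneg (Real.sqrt_nonneg x), Real.mul_self_sqrt hx]

theorem Finset.sum_eq_zero_iff_sum_comp_eq_zero_of_card_le_two {ι G H : Type*}
    [AddCommGroup G] [AddCommGroup H] {f : G → H} (hf : Function.Injective f) (hf0 : f 0 = 0)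
    (hneg : ∀ x, f (-x) = -f x) {s : Finset ι} (hs : #s ≤ 2) (u : ι → G) :
    ∑ i ∈ s, u i = 0 ↔ ∑ i ∈ s, f (u i) = 0 := by
  classical
  obtain h | h | h : #s = 0 ∨ #s = 1 ∨ #s = 2 := by omega
  · simp [card_eq_zero.1 h]
  · obtain ⟨i, rfl⟩ := card_eq_one.1 h
    rw [sum_singleton, sum_singleton, ← hf0, hf.eq_iff]
  · obtain ⟨i, k, hik, rfl⟩ := card_eq_two.1 h
    rw [sum_pair hik, sum_pair hik, add_eq_zero_iff_eq_neg, add_eq_zero_iff_eq_neg, ← hneg,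
      hf.eq_iff]

namespace Matrix

variable {m n : Type*} [Fintype m]

lemma vecMul_eq_zero_iff_vecMul_map_signedSq (M : Matrix m n ℝ)
    (hM : ∀ j, #{i | M i j ≠ 0} ≤ 2) (c : m → ℝ) :
    c ᵥ* M = 0 ↔ (signedSq ∘ c) ᵥ* M.map signedSq = 0 := by
  simp only [funext_iff, vecMul, dotProduct, Pi.zero_apply, Function.comp_apply, map_apply,
    ← map_mul]
  refine forall_congr' fun j => ?_
  rw [← sum_filter_of_ne (p := fun i => M i j ≠ 0) fun i _ h => right_ne_zero_of_mul h,
    ← sum_filter_of_ne (p := fun i => M i j ≠ 0) fun i _ h =>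
      right_ne_zero_of_mul ((map_ne_zero signedSq).1 h)]
  exact sum_eq_zero_iff_sum_comp_eq_zero_of_card_le_two signedSq.injective (map_zero _)
    signedSq_neg (hM j) _

lemma rank_add_finrank_ker_vecMulLinear [Fintype n] {R : Type*} [Field R] (M : Matrix m n R) :
    M.rank + finrank R (LinearMap.ker M.vecMulLinear) = Fintype.card m := by
  rw [← rank_transpose, rank, mulVecLin_transpose, LinearMap.finrank_range_add_finrank_ker,
    finrank_fintype_fun_eq_card]

end Matrix

lemma finrank_eq_one_of_mem_iff_comp_mem {K ι : Type*} [Field K] (e : K ≃* K)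
    {V W : Submodule K (ι → K)} (h : ∀ c, c ∈ V ↔ e ∘ c ∈ W) (hW : finrank K W = 1) :
    finrank K V = 1 := by
  obtain ⟨a, ha, ha0⟩ := W.ne_bot_iff.1 (by rintro rfl; simp at hW)
  have hv : e.symm ∘ a ∈ V := (h _).2 (by simpa [Function.comp_def] using ha)
  have hv0 : e.symm ∘ a ≠ 0 := fun h0 => ha0 (funext fun i => by simpa using congr_fun h0 i)
  suffices V = K ∙ (e.symm ∘ a) by rw [this, finrank_span_singleton hv0]
  refine le_antisymm (fun c hc => ?_) ((Submodule.span_singleton_le_iff_mem _ _).2 hv)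
  rw [eq_span_singleton_of_mem_of_finrank_eq_one hW ha ha0] at h
  obtain ⟨μ, hμ⟩ := Submodule.mem_span_singleton.1 ((h c).1 hc)
  refine Submodule.mem_span_singleton.2 ⟨e.symm μ, funext fun i => e.injective ?_⟩
  simpa using congr_fun hμ i

/-- if `S` is a nonnegative `(n+2) × f` matrix of rank `n+1` each of whose
columns has at least `n` zero entries, then the entrywise nonnegative square root of `S`
also has rank `n+1`. -/
theorem stmt12 (n f : ℕ) (S : Matrix (Fin (n+2)) (Fin f) ℝ)
    (hS : ∀ i j, 0 ≤ S i j) (hrank : S.rank = n + 1)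
    (hzeros : ∀ j, n ≤ ({i | S i j = 0} : Set (Fin (n+2))).ncard) :
    (Matrix.of fun i j => Real.sqrt (S i j)).rank = n + 1 := by
  set T : Matrix (Fin (n+2)) (Fin f) ℝ := Matrix.of fun i j => √(S i j)
  have hTS : T.map signedSq = S := by ext i j; exact signedSq_sqrt (hS i j)
  have hT : ∀ j, #{i | T i j ≠ 0} ≤ 2 := by
    intro j
    have hsplit := card_filter_add_card_filter_not (s := univ) fun i => S i j = 0
    rw [← Set.ncard_coe_finset, coe_filter] at hsplit
    simp only [T, Matrix.of_apply, ne_eq, Real.sqrt_eq_zero (hS _ j)]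
    simp only [mem_univ, true_and, card_univ, Fintype.card_fin] at hsplit
    linarith [hzeros j]
  have hker : ∀ c, c ∈ LinearMap.ker T.vecMulLinear ↔
      signedSq ∘ c ∈ LinearMap.ker S.vecMulLinear := by
    simpa [← hTS] using T.vecMul_eq_zero_iff_vecMul_map_signedSq hT
  have hkerS := S.rank_add_finrank_ker_vecMulLinear
  have hkerT := T.rank_add_finrank_ker_vecMulLinear
  rw [hrank, Fintype.card_fin] at hkerS
  rw [finrank_eq_one_of_mem_iff_comp_mem signedSq hker (by omega), Fintype.card_fin] at hkerT
  omega
end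

section
/- Suppose (a_i) are real numbers with Σ_{i=1}^{m} a_i s_i = 0 for vectors s_i ∈ ℝ_{≥0}^f, where for every coordinate j at most two of the products a_i (s_i)_j are nonzero. Define b_i = sgn(a_i)·√|a_i| and t_i ∈ ℝ^f by (t_i)_j = √((s_i)_j). Then Σ_{i=1}^m b_i t_i = 0. -/
/-!
In each coordinate `j`, `sgn(aᵢ)√|aᵢ| · √(sᵢ)ⱼ = sgn(aᵢ(sᵢ)ⱼ)√|aᵢ(sᵢ)ⱼ|` because `(sᵢ)ⱼ ≥ 0`.
The map `x ↦ sgn(x)√|x|` is odd, so it preserves a vanishing sum with at most two nonzero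
terms (`x + y = 0` forces `y = -x`).
-/

open Finset

noncomputable def signedSqrt (x : ℝ) : ℝ := Real.sign x * √|x|

@[simp]
lemma signedSqrt_zero : signedSqrt 0 = 0 := by
  simp [signedSqrt]

lemma signedSqrt_neg (x : ℝ) : signedSqrt (-x) = -signedSqrt x := by
  simp [signedSqrt, Real.sign_neg]

lemma Real.sign_mul_of_pos_right (x : ℝ) {y : ℝ} (hy : 0 < y) :
    Real.sign (x * y) = Real.sign x := by
  rcases lt_trichotomy x 0 with hx | rfl | hx
  · rw [Real.sign_of_neg hx, Real.sign_of_neg (mul_neg_of_neg_of_pos hx hy)]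
  · simp
  · rw [Real.sign_of_pos hx, Real.sign_of_pos (mul_pos hx hy)]

lemma signedSqrt_mul_of_nonneg (x : ℝ) {y : ℝ} (hy : 0 ≤ y) :
    signedSqrt (x * y) = signedSqrt x * √y := by
  rcases hy.eq_or_lt with rfl | hy
  · simp
  · rw [signedSqrt, signedSqrt, Real.sign_mul_of_pos_right x hy, abs_mul, abs_of_pos hy,
      Real.sqrt_mul (abs_nonneg x), mul_assoc]

lemma sum_signedSqrt_eq_zero_of_card_le_two {ι : Type*} {T : Finset ι} {u : ι → ℝ}
    (hT : T.card ≤ 2) (hu : ∑ i ∈ T, u i = 0) : ∑ i ∈ T, signedSqrt (u i) = 0 := by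
  classical
  interval_cases h : T.card
  · simp [card_eq_zero.mp h]
  · obtain ⟨i, rfl⟩ := card_eq_one.mp h
    simp_all
  · obtain ⟨i, k, hik, rfl⟩ := card_eq_two.mp h
    rw [sum_pair hik] at hu ⊢
    rw [eq_neg_of_add_eq_zero_right hu, signedSqrt_neg, add_neg_cancel]

lemma sum_signedSqrt_eq_zero {ι : Type*} [Fintype ι] {u : ι → ℝ}
    (hcard : {i | u i ≠ 0}.ncard ≤ 2) (hu : ∑ i, u i = 0) : ∑ i, signedSqrt (u i) = 0 := by
  classical
  have hT : (univ.filter (u · ≠ 0)).card ≤ 2 := by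
    simpa [← Set.ncard_coe_finset] using hcard
  rw [← sum_filter_ne_zero] at hu
  rw [← sum_filter_of_ne (p := (u · ≠ 0)) (fun i _ hi h0 => hi (by rw [h0, signedSqrt_zero]))]
  exact sum_signedSqrt_eq_zero_of_card_le_two hT hu

/-- if `∑ aᵢ sᵢ = 0` with `sᵢ ≥ 0` and in every coordinate at most two of
the products `aᵢ (sᵢ)ⱼ` are nonzero, then `∑ sgn(aᵢ)√|aᵢ| · √sᵢ = 0` (entrywise roots). -/
theorem stmt13 (m f : ℕ) (a : Fin m → ℝ) (s : Fin m → (Fin f → ℝ))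
    (hs : ∀ i j, 0 ≤ s i j)
    (hsum : ∑ i, a i • s i = 0)
    (hcard : ∀ j : Fin f, ({i | a i * s i j ≠ 0} : Set (Fin m)).ncard ≤ 2) :
    ∑ i, (Real.sign (a i) * Real.sqrt |a i|) • (fun j => Real.sqrt (s i j)) =
      (0 : Fin f → ℝ) := by
  funext j
  have hsumj : ∑ i, a i * s i j = 0 := by
    simpa [Finset.sum_apply] using congrFun hsum j
  calc (∑ i, (Real.sign (a i) * √|a i|) • fun j => √(s i j)) j
      = ∑ i, signedSqrt (a i * s i j) := by
        simp only [Finset.sum_apply, signedSqrt_mul_of_nonneg _ (hs _ j)]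
        rfl
    _ = 0 := sum_signedSqrt_eq_zero (hcard j) hsumj
end

section
/- There is no 2-level polytope combinatorially equivalent to an n-dimensional double simplex (bipyramid over an (n−1)-simplex) for n ≥ 3. Equivalently: the (n+2)×2n 0/1 matrix M with first row (0,...,0,1,...,1), last row (1,...,1,0,...,0), and middle block (I_n | I_n) is not the slack matrix of any n-dimensional polytope when n ≥ 3. -/
/-!
The vector `z = (1, -1, …, -1, 1)` lies in the left kernel of the double-simplex matrix `M`,
while `∑ zᵢ = 2 - n ≠ 0`. If `Mᵢⱼ = βⱼ - ⟪aⱼ, pᵢ⟫`, then `w = (∑ zᵢ)⁻¹ ∑ zᵢ pᵢ` makes every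
inequality `⟪aⱼ, x⟫ ≤ βⱼ` tight. A bounded polyhedron with a point that is tight for all of its
inequalities is that single point (every other point would give a recession direction), so
every vertex `pᵢ` equals `w` and `M` would vanish, which it does not.
-/

/-- The `(n+2) × 2n` 0/1 support matrix of the n-dimensional double simplex: first row
`(0,…,0,1,…,1)`, last row `(1,…,1,0,…,0)`, middle block `(Iₙ | Iₙ)`. -/
def doubleSimplexMatrix (n : ℕ) : Matrix (Fin (n+2)) (Fin (2*n)) ℝ := fun i j =>
  if i.val = 0 then (if j.val < n then 0 else 1)
  else if i.val = n + 1 then (if j.val < n then 1 else 0)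
  else (if j.val = i.val - 1 ∨ j.val = n + i.val - 1 then 1 else 0)

open Bornology Matrix

theorem eq_zero_of_isBounded_of_forall_add_smul_mem {E : Type*} [NormedAddCommGroup E]
    [NormedSpace ℝ E] {S : Set E} (hS : IsBounded S) {w d : E}
    (hray : ∀ t : ℝ, 0 ≤ t → w + t • d ∈ S) : d = 0 := by
  obtain ⟨C, hC⟩ := isBounded_iff_forall_norm_le.mp hS
  by_contra hd
  have hdpos : 0 < ‖d‖ := norm_pos_iff.mpr hd
  have hC0 : ‖w‖ ≤ C := by simpa using hC _ (hray 0 le_rfl)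
  set t := (C + ‖w‖ + 1) / ‖d‖
  have ht : 0 ≤ t := div_nonneg (by linarith [norm_nonneg w]) hdpos.le
  have hnorm : ‖t • d‖ = C + ‖w‖ + 1 := by
    rw [norm_smul, Real.norm_of_nonneg ht, div_mul_cancel₀ _ hdpos.ne']
  have htri : ‖t • d‖ ≤ ‖w + t • d‖ + ‖w‖ := by
    simpa using norm_sub_le (w + t • d) w
  linarith [hC _ (hray t ht)]

theorem eq_of_forall_dotProduct_eq_of_isBounded {m ι : Type*} [Fintype m]
    {a : ι → m → ℝ} {β : ι → ℝ} (hbdd : IsBounded {x | ∀ j, a j ⬝ᵥ x ≤ β j})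
    {w x : m → ℝ} (hw : ∀ j, a j ⬝ᵥ w = β j) (hx : ∀ j, a j ⬝ᵥ x ≤ β j) : x = w := by
  suffices x - w = 0 from sub_eq_zero.mp this
  refine eq_zero_of_isBounded_of_forall_add_smul_mem (w := w) hbdd fun t ht j => ?_
  have hslack : a j ⬝ᵥ (x - w) ≤ 0 := by rw [dotProduct_sub, hw]; linarith [hx j]
  rw [dotProduct_add, dotProduct_smul, hw, smul_eq_mul]
  linarith [mul_nonpos_of_nonneg_of_nonpos ht hslack]

theorem exists_forall_dotProduct_eq_of_vecMul_eq_zero {ι m k : Type*} [Fintype ι] [Fintype m]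
    {M : Matrix ι k ℝ} {p : ι → m → ℝ} {a : k → m → ℝ} {β : k → ℝ}
    (hM : ∀ i j, M i j = β j - a j ⬝ᵥ p i) {z : ι → ℝ} (hz : z ᵥ* M = 0)
    (hsum : ∑ i, z i ≠ 0) : ∃ w, ∀ j, a j ⬝ᵥ w = β j := by
  refine ⟨(∑ i, z i)⁻¹ • ∑ i, z i • p i, fun j => ?_⟩
  have hzj : ∑ i, z i * (β j - a j ⬝ᵥ p i) = 0 := by
    simpa [vecMul, dotProduct, hM] using congrFun hz j
  have hcomb : a j ⬝ᵥ ∑ i, z i • p i = (∑ i, z i) * β j := by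
    simp only [mul_sub, Finset.sum_sub_distrib, ← Finset.sum_mul] at hzj
    simp only [dotProduct_sum, dotProduct_smul, smul_eq_mul]
    linarith
  rw [dotProduct_smul, hcomb, smul_eq_mul, inv_mul_cancel_left₀ hsum]

def doubleSimplexKernelVector (n : ℕ) : Fin (n+2) → ℝ := fun i =>
  if i.val = 0 ∨ i.val = n + 1 then 1 else -1

theorem sum_doubleSimplexKernelVector (n : ℕ) : ∑ i, doubleSimplexKernelVector n i = 2 - n := by
  rw [Fin.sum_univ_succ, Fin.sum_univ_castSucc]
  simp [doubleSimplexKernelVector, Fin.is_lt, ne_of_lt]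
  ring

theorem doubleSimplexKernelVector_vecMul (n : ℕ) :
    doubleSimplexKernelVector n ᵥ* doubleSimplexMatrix n = 0 := by
  ext j
  simp only [vecMul, dotProduct, Pi.zero_apply]
  rw [Fin.sum_univ_succ, Fin.sum_univ_castSucc]
  rcases lt_or_ge j.val n with hj | hj
  · have hx (x : Fin n) : (j.val = x ∨ j.val = n + x) ↔ x = ⟨j, hj⟩ := by
      rw [Fin.ext_iff]; dsimp only; omega
    simp [doubleSimplexKernelVector, doubleSimplexMatrix, Fin.is_lt, ne_of_lt, hx, hj]
  · have hx (x : Fin n) : (j.val = x ∨ j.val = n + x) ↔ x = ⟨j - n, by omega⟩ := by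
      rw [Fin.ext_iff]; dsimp only; omega
    simp [doubleSimplexKernelVector, doubleSimplexMatrix, Fin.is_lt, ne_of_lt, hx, hj.not_gt]

/-- for `n ≥ 3`, the matrix `doubleSimplexMatrix n` is not the slack matrix
of any `n`-dimensional polytope; i.e. no 2-level polytope is combinatorially equivalent
to the `n`-dimensional double simplex. -/
theorem stmt14 (n : ℕ) (hn : 3 ≤ n) :
    ¬ ∃ (p : Fin (n+2) → (Fin n → ℝ)) (a : Fin (2*n) → (Fin n → ℝ)) (β : Fin (2*n) → ℝ)
      (P : Set (Fin n → ℝ)),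
      P = {x | ∀ j, dotProduct (a j) x ≤ β j} ∧
      P = convexHull ℝ (Set.range p) ∧
      Set.range p = Set.extremePoints ℝ P ∧
      Bornology.IsBounded P ∧
      (interior P).Nonempty ∧
      (∀ i j, doubleSimplexMatrix n i j = β j - dotProduct (a j) (p i)) := by
  rintro ⟨p, a, β, _, rfl, hconv, -, hbdd, -, hM⟩
  have hsum : ∑ i, doubleSimplexKernelVector n i ≠ 0 := by
    rw [sum_doubleSimplexKernelVector]
    have : (3 : ℝ) ≤ n := by exact_mod_cast hn
    linarith
  obtain ⟨w, hw⟩ := exists_forall_dotProduct_eq_of_vecMul_eq_zero hM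
    (doubleSimplexKernelVector_vecMul n) hsum
  have hp0 : p 0 ∈ {x | ∀ j, a j ⬝ᵥ x ≤ β j} :=
    hconv ▸ subset_convexHull ℝ _ (Set.mem_range_self 0)
  have hM0 := hM 0 ⟨n, by omega⟩
  rw [eq_of_forall_dotProduct_eq_of_isBounded hbdd hw hp0, hw, sub_self] at hM0
  simp [doubleSimplexMatrix] at hM0
end
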